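/- Assume σ ≥ 6r/m. Then for every integer k ≥ 1, min_{1 ≤ j ≤ k} ‖∇f(x^{τ_j})‖² ≤ (100·m·σ·k₀/k)·(𝓛(Z^0) − f*). -/

import Mathlib

open scoped RealInnerProductSpace
open Filter Topology

section AuxLemmas

variable {E : Type*} [NormedAddCommGroup E] [InnerProductSpace ℝ E]

omit [InnerProductSpace ℝ E] in
private lemma two_sq_trick (a b c : ℝ) (hc : 0 ≤ c) (h : a ≤ b) : True := trivial

/-- Cauchy–Schwarz for a psd symmetric operator. -/
private lemma psd_cs (H : E →L[ℝ] E) (hsymm : ∀ x y, ⟪H x, y⟫ = ⟪x, H y⟫)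
    (hpsd : ∀ x, 0 ≤ ⟪H x, x⟫) (u v : E) :
    ⟪H u, v⟫ ^ 2 ≤ ⟪H u, u⟫ * ⟪H v, v⟫ := by
  have key : ∀ t : ℝ, 0 ≤ ⟪H v, v⟫ * (t * t) + (2 * ⟪H u, v⟫) * t + ⟪H u, u⟫ := by
    intro t
    have h0 := hpsd (u + t • v)
    have hexp : ⟪H (u + t • v), u + t • v⟫
        = ⟪H v, v⟫ * (t * t) + (2 * ⟪H u, v⟫) * t + ⟪H u, u⟫ := by
      have h1 : H (u + t • v) = H u + t • H v := by
        rw [map_add, map_smul]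
      rw [h1, inner_add_left, inner_add_right, inner_add_right,
        real_inner_smul_left, real_inner_smul_right, real_inner_smul_left,
        real_inner_smul_right]
      have : ⟪H v, u⟫ = ⟪H u, v⟫ := by
        rw [hsymm v u, real_inner_comm]
      rw [this]; ring
    rw [hexp] at h0; linarith
  have hd := discrim_le_zero (a := ⟪H v, v⟫) (b := 2 * ⟪H u, v⟫) (c := ⟪H u, u⟫) key
  rw [discrim] at hd
  nlinarith [hd]

private lemma psd_op_norm (H : E →L[ℝ] E) (r : ℝ) (hr : 0 ≤ r)
    (hsymm : ∀ x y, ⟪H x, y⟫ = ⟪x, H y⟫)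
    (hpsd : ∀ x, 0 ≤ ⟪H x, x⟫) (hle : ∀ x, ⟪H x, x⟫ ≤ r * ‖x‖ ^ 2) (v : E) :
    ‖H v‖ ≤ r * ‖v‖ := by
  have h1 : ⟪H v, H v⟫ ^ 2 ≤ ⟪H v, v⟫ * ⟪H (H v), H v⟫ := psd_cs H hsymm hpsd v (H v)
  rw [real_inner_self_eq_norm_sq] at h1
  have h2 : ⟪H v, v⟫ ≤ r * ‖v‖ ^ 2 := hle v
  have h3 : ⟪H (H v), H v⟫ ≤ r * ‖H v‖ ^ 2 := hle (H v)
  have h4 : 0 ≤ ⟪H v, v⟫ := hpsd v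
  have h5 : 0 ≤ ⟪H (H v), H v⟫ := hpsd (H v)
  have h6 : ⟪H v, v⟫ * ⟪H (H v), H v⟫ ≤ (r * ‖v‖ ^ 2) * (r * ‖H v‖ ^ 2) :=
    mul_le_mul h2 h3 h5 (by positivity)
  have h7 : (‖H v‖ ^ 2) ^ 2 ≤ (r * ‖v‖ ^ 2) * (r * ‖H v‖ ^ 2) := le_trans h1 h6
  rcases eq_or_lt_of_le (norm_nonneg (H v)) with hz | hz
  · rw [← hz]; positivity
  · have h8 : ‖H v‖ ^ 2 ≤ (r * ‖v‖) ^ 2 := by nlinarith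
    nlinarith [mul_nonneg hr (norm_nonneg v)]

/-- Descent-type two sided bound from Lipschitz gradient (with constant `r` instead of `r/2`). -/
private lemma lip_grad_bound [CompleteSpace E] (f : E → ℝ) (hf : ContDiff ℝ 1 f) (r : ℝ)
    (hr : 0 ≤ r)
    (hlip : ∀ x z, ‖gradient f x - gradient f z‖ ≤ r * ‖x - z‖) (x z : E) :
    |f x - f z - ⟪gradient f z, x - z⟫| ≤ r * ‖x - z‖ ^ 2 := by
  have hdiff : ∀ y : E, DifferentiableAt ℝ f y := fun y =>
    (hf.differentiable one_ne_zero).differentiableAt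
  have key : ‖f x - f z - (fderiv ℝ f z) (x - z)‖ ≤ (r * ‖x - z‖) * ‖x - z‖ := by
    apply Convex.norm_image_sub_le_of_norm_fderiv_le' (fun y _ => hdiff y)
      ?_ (convex_segment z x) (left_mem_segment ℝ z x) (right_mem_segment ℝ z x)
    intro y hy
    rcases hy with ⟨a, b, ha, hb, hab, rfl⟩
    have hyz : (a • z + b • x) - z = b • (x - z) := by
      have haz : a = 1 - b := by linarith
      rw [haz, sub_smul, one_smul, smul_sub]; abel
    have hle1 : ‖(a • z + b • x) - z‖ ≤ ‖x - z‖ := by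
      rw [hyz, norm_smul, Real.norm_eq_abs, abs_of_nonneg hb]
      nlinarith [norm_nonneg (x - z)]
    have h2 : ‖fderiv ℝ f (a • z + b • x) - fderiv ℝ f z‖
        = ‖gradient f (a • z + b • x) - gradient f z‖ := by
      unfold gradient
      rw [← map_sub]
      exact ((InnerProductSpace.toDual ℝ E).symm.norm_map _).symm
    rw [h2]
    calc ‖gradient f (a • z + b • x) - gradient f z‖
        ≤ r * ‖(a • z + b • x) - z‖ := hlip _ _
      _ ≤ r * ‖x - z‖ := mul_le_mul_of_nonneg_left hle1 hr
  have hgrad : (fderiv ℝ f z) (x - z) = ⟪gradient f z, x - z⟫ := by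
    unfold gradient
    rw [InnerProductSpace.toDual_symm_apply]
  rw [hgrad] at key
  rw [Real.norm_eq_abs] at key
  calc |f x - f z - ⟪gradient f z, x - z⟫| ≤ r * ‖x - z‖ * ‖x - z‖ := key
    _ = r * ‖x - z‖ ^ 2 := by ring

private lemma gradient_sum_eq {n m : ℕ} (fi : Fin m → EuclideanSpace ℝ (Fin n) → ℝ)
    (hfiC1 : ∀ i, ContDiff ℝ 1 (fi i)) (x : EuclideanSpace ℝ (Fin n)) :
    gradient (fun y => (m : ℝ)⁻¹ * ∑ i, fi i y) x
      = (m : ℝ)⁻¹ • ∑ i, gradient (fi i) x := by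
  have hdiff : ∀ i, DifferentiableAt ℝ (fi i) x := fun i =>
    ((hfiC1 i).differentiable one_ne_zero).differentiableAt
  have hsum : DifferentiableAt ℝ (fun y => ∑ i, fi i y) x :=
    DifferentiableAt.fun_sum fun i _ => hdiff i
  unfold gradient
  rw [fderiv_const_mul hsum, fderiv_fun_sum (fun i _ => hdiff i)]
  rw [map_smul, map_sum]

end AuxLemmas

/-- `ℝⁿ` as a Euclidean space. -/
abbrev Vec (n : ℕ) := EuclideanSpace ℝ (Fin n)

/-- The augmented Lagrangian
`𝓛(x, X, Π) = ∑ i [(1/m) fᵢ(Xᵢ) + ⟪Xᵢ - x, Πᵢ⟫ + (σ/2)‖Xᵢ - x‖²]`. -/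
noncomputable def LA {n : ℕ} (m : ℕ) (σ : ℝ) (fi : Fin m → Vec n → ℝ)
    (x : Vec n) (X P : Fin m → Vec n) : ℝ :=
  ∑ i, ((m : ℝ)⁻¹ * fi i (X i) + ⟪X i - x, P i⟫ + σ / 2 * ‖X i - x‖ ^ 2)

/-- The overall loss `f = (1/m) ∑ i, fᵢ`. -/
noncomputable def ftot {n : ℕ} (m : ℕ) (fi : Fin m → Vec n → ℝ) (x : Vec n) : ℝ :=
  (m : ℝ)⁻¹ * ∑ i, fi i x

set_option maxHeartbeats 2000000 in
theorem fedgia_stmt16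
    (n m k₀ : ℕ) (hn : 0 < n) (hm : 0 < m) (hk₀ : 0 < k₀)
    (σ : ℝ) (hσ : 0 < σ)
    (fi : Fin m → Vec n → ℝ)
    (ri : Fin m → ℝ)
    (hfiC1 : ∀ i, ContDiff ℝ 1 (fi i))
    (hfib : ∀ i, BddBelow (Set.range (fi i)))
    (hri : ∀ i, 0 < ri i)
    (hlip : ∀ i x z, ‖gradient (fi i) x - gradient (fi i) z‖ ≤ ri i * ‖x - z‖)
    (H : Fin m → (Vec n →L[ℝ] Vec n))
    (hHsymm : ∀ i x y, ⟪H i x, y⟫ = ⟪x, H i y⟫)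
    (hHpsd : ∀ i x, 0 ≤ ⟪H i x, x⟫)
    (hHle : ∀ i x, ⟪H i x, x⟫ ≤ ri i * ‖x‖ ^ 2)
    (hHdesc : ∀ i x z, fi i x ≤ fi i z + ⟪gradient (fi i) z, x - z⟫
        + (1 / 2) * ⟪H i (x - z), x - z⟫)
    (xb : ℕ → Vec n)
    (xi pii zi : Fin m → ℕ → Vec n)
    (C : ℕ → Finset (Fin m))
    (hx0 : ∀ i, xi i 0 = xb 0)
    (hp0 : ∀ i, pii i 0 = -((m : ℝ)⁻¹ • gradient (fi i) (xb 0)))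
    (hz0 : ∀ i, zi i 0 = xi i 0 + σ⁻¹ • pii i 0)
    (hagg : ∀ k : ℕ, k % k₀ = 0 → xb ((k + 1) / k₀) = (m : ℝ)⁻¹ • ∑ i, zi i k)
    (hupdx : ∀ k : ℕ, ∀ i ∈ C ((k + 1) / k₀),
      (m : ℝ)⁻¹ • H i (xi i (k + 1) - xb ((k + 1) / k₀))
        + σ • (xi i (k + 1) - xb ((k + 1) / k₀))
        + (m : ℝ)⁻¹ • gradient (fi i) (xb ((k + 1) / k₀)) + pii i k = 0)
    (hupdp : ∀ k : ℕ, ∀ i ∈ C ((k + 1) / k₀),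
      pii i (k + 1) = pii i k + σ • (xi i (k + 1) - xb ((k + 1) / k₀)))
    (hupdz : ∀ k : ℕ, ∀ i ∈ C ((k + 1) / k₀),
      zi i (k + 1) = xi i (k + 1) + σ⁻¹ • pii i (k + 1))
    (hfixx : ∀ k : ℕ, ∀ i ∉ C ((k + 1) / k₀), xi i (k + 1) = xb ((k + 1) / k₀))
    (hfixp : ∀ k : ℕ, ∀ i ∉ C ((k + 1) / k₀),
      pii i (k + 1) = -((m : ℝ)⁻¹ • gradient (fi i) (xb ((k + 1) / k₀))))
    (hfixz : ∀ k : ℕ, ∀ i ∉ C ((k + 1) / k₀),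
      zi i (k + 1) = xb ((k + 1) / k₀)
        - σ⁻¹ • ((m : ℝ)⁻¹ • gradient (fi i) (xb ((k + 1) / k₀))))
    (hσr : ∀ i, 6 * ri i / (m : ℝ) ≤ σ) :
    ∀ k : ℕ, 1 ≤ k → ∃ j : ℕ, 1 ≤ j ∧ j ≤ k ∧
      ‖gradient (ftot m fi) (xb (j / k₀))‖ ^ 2 ≤
        100 * m * σ * k₀ / k *
          (LA m σ fi (xb 0) (fun i => xi i 0) (fun i => pii i 0)
            - sInf (Set.range (ftot m fi))) := by
  intro k hk
  have hmR : (0 : ℝ) < m := by exact_mod_cast hm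
  have hm1 : (1 : ℝ) ≤ m := by exact_mod_cast hm
  have hrm : ∀ i, ri i * (m : ℝ)⁻¹ ≤ σ / 6 := by
    intro i
    have h := hσr i
    rw [div_le_iff₀ hmR] at h
    rw [← div_eq_mul_inv, div_le_iff₀ hmR]
    linarith
  have hHop : ∀ i (v : Vec n), ‖H i v‖ ≤ ri i * ‖v‖ := fun i =>
    psd_op_norm (H i) (ri i) (hri i).le (hHsymm i) (hHpsd i) (hHle i)
  have hgb : ∀ i x z, |fi i x - fi i z - ⟪gradient (fi i) z, x - z⟫| ≤ ri i * ‖x - z‖ ^ 2 :=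
    fun i => lip_grad_bound (fi i) (hfiC1 i) (ri i) (hri i).le (hlip i)
  have hgradf : ∀ x, gradient (ftot m fi) x = (m : ℝ)⁻¹ • ∑ i, gradient (fi i) x := by
    intro x
    exact gradient_sum_eq fi hfiC1 x
  have hbddf : BddBelow (Set.range (ftot m fi)) := by
    choose b hb using hfib
    refine ⟨(m : ℝ)⁻¹ * ∑ i, b i, ?_⟩
    rintro y ⟨x, rfl⟩
    have hsum : ∑ i, b i ≤ ∑ i, fi i x :=
      Finset.sum_le_sum fun i _ => hb i ⟨x, rfl⟩
    have : (0:ℝ) ≤ (m : ℝ)⁻¹ := by positivity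
    simpa [ftot] using mul_le_mul_of_nonneg_left hsum this
  have hfstar : ∀ x, sInf (Set.range (ftot m fi)) ≤ ftot m fi x := fun x =>
    csInf_le hbddf ⟨x, rfl⟩
  have hL0 : LA m σ fi (xb 0) (fun i => xi i 0) (fun i => pii i 0) = ftot m fi (xb 0) := by
    simp only [LA, ftot, hx0, sub_self, inner_zero_left, norm_zero, Finset.mul_sum]
    simp
  have hD0 : 0 ≤ LA m σ fi (xb 0) (fun i => xi i 0) (fun i => pii i 0)
      - sInf (Set.range (ftot m fi)) := by
    rw [hL0]
    have := hfstar (xb 0)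
    linarith
  by_cases hk1 : k₀ = 1
  case neg =>
    -- k₀ ≥ 2 : the first aggregation forces the gradient at `xb 0` to vanish.
    have hk2 : 2 ≤ k₀ := by omega
    have h10 : 1 / k₀ = 0 := Nat.div_eq_of_lt (by omega)
    have hg0 : ∑ i, gradient (fi i) (xb 0) = 0 := by
      have h := hagg 0 (Nat.zero_mod k₀)
      rw [zero_add, h10] at h
      have hz : ∀ i ∈ Finset.univ, zi i 0
          = xb 0 - (σ⁻¹ * (m : ℝ)⁻¹) • gradient (fi i) (xb 0) := by
        intro i _
        rw [hz0 i, hx0 i, hp0 i, smul_neg, smul_smul, sub_eq_add_neg]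
      rw [Finset.sum_congr rfl hz, Finset.sum_sub_distrib, Finset.sum_const,
        Finset.card_univ, Fintype.card_fin, ← Finset.smul_sum,
        ← Nat.cast_smul_eq_nsmul ℝ, smul_sub, smul_smul, smul_smul,
        inv_mul_cancel₀ (ne_of_gt hmR), one_smul] at h
      have h2 : ((m : ℝ)⁻¹ * (σ⁻¹ * (m : ℝ)⁻¹)) • ∑ i, gradient (fi i) (xb 0) = 0 := by
        have := sub_eq_self.mp h.symm
        exact this
      have hne : ((m : ℝ)⁻¹ * (σ⁻¹ * (m : ℝ)⁻¹)) ≠ 0 := by positivity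
      exact (smul_eq_zero.mp h2).resolve_left hne
    refine ⟨1, le_refl 1, hk, ?_⟩
    rw [h10, hgradf, hg0, smul_zero, norm_zero]
    have hc : (0:ℝ) ≤ 100 * m * σ * k₀ / k := by positivity
    have := mul_nonneg hc hD0
    nlinarith
  case pos =>
    subst hk1
    simp only [Nat.div_one, Nat.cast_one, mul_one] at hupdx hupdp hupdz hfixx hfixp hfixz ⊢
    have hagg1 : ∀ k : ℕ, xb (k + 1) = (m : ℝ)⁻¹ • ∑ i, zi i k := by
      intro k
      have := hagg k (Nat.mod_one k)
      rwa [Nat.div_one] at this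
    clear hagg
    -- basic structure of the iterates
    have hA : ∀ k i, pii i k
        = -((m : ℝ)⁻¹ • (gradient (fi i) (xb k) + H i (xi i k - xb k))) := by
      intro k i
      cases k with
      | zero => rw [hp0 i, hx0 i, sub_self, map_zero, add_zero]
      | succ k =>
        by_cases hC : i ∈ C (k + 1)
        · have h1 := hupdx k i hC
          have h2 := hupdp k i hC
          have h1' : pii i k
              = -((m : ℝ)⁻¹ • H i (xi i (k + 1) - xb (k + 1))
                + σ • (xi i (k + 1) - xb (k + 1))
                + (m : ℝ)⁻¹ • gradient (fi i) (xb (k + 1))) := by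
            have h := eq_neg_of_add_eq_zero_left h1
            rw [h, neg_neg]
          rw [h2, h1', smul_add]
          abel
        · rw [hfixp k i hC, hfixx k i hC, sub_self, map_zero, add_zero]
    have hB : ∀ k i, zi i k = xi i k + σ⁻¹ • pii i k := by
      intro k i
      cases k with
      | zero => exact hz0 i
      | succ k =>
        by_cases hC : i ∈ C (k + 1)
        · exact hupdz k i hC
        · rw [hfixz k i hC, hfixx k i hC, hfixp k i hC, smul_neg, sub_eq_add_neg]
    have hAgg : ∀ k, (m : ℝ) • xb (k + 1) = (∑ i, xi i k) + σ⁻¹ • ∑ i, pii i k := by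
      intro k
      have h := hagg1 k
      rw [Finset.sum_congr rfl (fun i _ => hB k i), Finset.sum_add_distrib,
        ← Finset.smul_sum] at h
      rw [h, smul_smul, mul_inv_cancel₀ (ne_of_gt hmR), one_smul]
    have hinner : ∀ k i (w : Vec n), ⟪w, pii i k⟫
        = -((m : ℝ)⁻¹ * ⟪gradient (fi i) (xb k), w⟫)
          - (m : ℝ)⁻¹ * ⟪H i (xi i k - xb k), w⟫ := by
      intro k i w
      rw [hA k i, inner_neg_right, real_inner_smul_right, inner_add_right,
        real_inner_comm w (gradient (fi i) (xb k)),
        real_inner_comm w ((H i) (xi i k - xb k))]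
      ring
    have hRec : ∀ k i, ‖xi i (k+1) - xb (k+1)‖
        ≤ 1/5 * (‖xb (k+1) - xb k‖ + ‖xi i k - xb k‖) := by
      intro k i
      by_cases hC : i ∈ C (k + 1)
      · have h2 := hupdp k i hC
        have hΔ : σ • (xi i (k+1) - xb (k+1))
            = ((m : ℝ)⁻¹ • (gradient (fi i) (xb k) - gradient (fi i) (xb (k+1))))
              + ((m : ℝ)⁻¹ • (H i (xi i k - xb k) - H i (xi i (k+1) - xb (k+1)))) := by
          have e : σ • (xi i (k+1) - xb (k+1)) = pii i (k+1) - pii i k := by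
            rw [h2]; abel
          rw [e, hA (k+1) i, hA k i, smul_add, smul_add, smul_sub, smul_sub]
          abel
        have hn1 : σ * ‖xi i (k+1) - xb (k+1)‖ = ‖σ • (xi i (k+1) - xb (k+1))‖ := by
          rw [norm_smul, Real.norm_eq_abs, abs_of_pos hσ]
        have hb1 : ‖(m : ℝ)⁻¹ • (gradient (fi i) (xb k) - gradient (fi i) (xb (k+1)))‖
            ≤ σ/6 * ‖xb (k+1) - xb k‖ := by
          rw [norm_smul, Real.norm_eq_abs, abs_of_pos (by positivity : (0:ℝ) < (m:ℝ)⁻¹)]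
          calc (m : ℝ)⁻¹ * ‖gradient (fi i) (xb k) - gradient (fi i) (xb (k+1))‖
              ≤ (m : ℝ)⁻¹ * (ri i * ‖xb k - xb (k+1)‖) :=
                mul_le_mul_of_nonneg_left (hlip i _ _) (by positivity)
            _ = (ri i * (m : ℝ)⁻¹) * ‖xb (k+1) - xb k‖ := by rw [norm_sub_rev]; ring
            _ ≤ σ/6 * ‖xb (k+1) - xb k‖ :=
                mul_le_mul_of_nonneg_right (hrm i) (norm_nonneg _)
        have hb2 : ‖(m : ℝ)⁻¹ • (H i (xi i k - xb k) - H i (xi i (k+1) - xb (k+1)))‖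
            ≤ σ/6 * (‖xi i k - xb k‖ + ‖xi i (k+1) - xb (k+1)‖) := by
          rw [norm_smul, Real.norm_eq_abs, abs_of_pos (by positivity : (0:ℝ) < (m:ℝ)⁻¹),
            ← map_sub]
          calc (m : ℝ)⁻¹ * ‖H i ((xi i k - xb k) - (xi i (k+1) - xb (k+1)))‖
              ≤ (m : ℝ)⁻¹ * (ri i * ‖(xi i k - xb k) - (xi i (k+1) - xb (k+1))‖) :=
                mul_le_mul_of_nonneg_left (hHop i _) (by positivity)
            _ ≤ (m : ℝ)⁻¹ * (ri i * (‖xi i k - xb k‖ + ‖xi i (k+1) - xb (k+1)‖)) := by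
                gcongr
                · exact (hri i).le
                · exact norm_sub_le _ _
            _ = (ri i * (m : ℝ)⁻¹) * (‖xi i k - xb k‖ + ‖xi i (k+1) - xb (k+1)‖) := by ring
            _ ≤ σ/6 * (‖xi i k - xb k‖ + ‖xi i (k+1) - xb (k+1)‖) :=
                mul_le_mul_of_nonneg_right (hrm i) (by positivity)
        have hsum : σ * ‖xi i (k+1) - xb (k+1)‖
            ≤ σ/6 * ‖xb (k+1) - xb k‖
              + σ/6 * (‖xi i k - xb k‖ + ‖xi i (k+1) - xb (k+1)‖) := by
          rw [hn1, hΔ]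
          exact le_trans (norm_add_le _ _) (add_le_add hb1 hb2)
        nlinarith [hsum, hσ, norm_nonneg (xi i (k+1) - xb (k+1)),
          norm_nonneg (xb (k+1) - xb k), norm_nonneg (xi i k - xb k)]
      · rw [hfixx k i hC, sub_self, norm_zero]
        positivity
    have hSnn : ∀ k, (0:ℝ) ≤ ∑ i, ‖xi i k - xb k‖^2 := by
      intro k; positivity
    have hSRec : ∀ k, (∑ i, ‖xi i (k+1) - xb (k+1)‖^2)
        ≤ 1/12 * ((m:ℝ) * ‖xb (k+1) - xb k‖^2 + ∑ i, ‖xi i k - xb k‖^2) := by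
      intro k
      have hterm : ∀ i ∈ Finset.univ, ‖xi i (k+1) - xb (k+1)‖^2
          ≤ 1/12 * ‖xb (k+1) - xb k‖^2 + 1/12 * ‖xi i k - xb k‖^2 := by
        intro i _
        have h := hRec k i
        have h2 := pow_le_pow_left₀ (norm_nonneg (xi i (k+1) - xb (k+1))) h 2
        nlinarith [sq_nonneg (‖xb (k+1) - xb k‖ - ‖xi i k - xb k‖),
          sq_nonneg (‖xb (k+1) - xb k‖), sq_nonneg (‖xi i k - xb k‖)]
      calc (∑ i, ‖xi i (k+1) - xb (k+1)‖^2)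
          ≤ ∑ i : Fin m, (1/12 * ‖xb (k+1) - xb k‖^2 + 1/12 * ‖xi i k - xb k‖^2) :=
            Finset.sum_le_sum hterm
        _ = 1/12 * ((m:ℝ) * ‖xb (k+1) - xb k‖^2 + ∑ i, ‖xi i k - xb k‖^2) := by
            rw [Finset.sum_add_distrib, Finset.sum_const, Finset.card_univ, Fintype.card_fin,
              nsmul_eq_mul, ← Finset.mul_sum]
            ring
    have hQ : ∀ k, LA m σ fi (xb (k+1)) (fun i => xi i k) (fun i => pii i k)
        = LA m σ fi (xb k) (fun i => xi i k) (fun i => pii i k)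
          - (m:ℝ) * σ / 2 * ‖xb (k+1) - xb k‖^2 := by
      intro k
      have hzero : ∑ i, (pii i k + σ • (xi i k - xb (k+1))) = 0 := by
        rw [Finset.sum_add_distrib, ← Finset.smul_sum, Finset.sum_sub_distrib,
          Finset.sum_const, Finset.card_univ, Fintype.card_fin, ← Nat.cast_smul_eq_nsmul ℝ,
          hAgg k]
        have e : (∑ i, xi i k) - ((∑ i, xi i k) + σ⁻¹ • ∑ i, pii i k)
            = -(σ⁻¹ • ∑ i, pii i k) := by abel
        rw [e, smul_neg, smul_smul, mul_inv_cancel₀ (ne_of_gt hσ), one_smul]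
        abel
      have hper : ∀ i ∈ Finset.univ,
          ((m:ℝ)⁻¹ * fi i (xi i k) + ⟪xi i k - xb (k+1), pii i k⟫
            + σ/2 * ‖xi i k - xb (k+1)‖^2)
          = ((m:ℝ)⁻¹ * fi i (xi i k) + ⟪xi i k - xb k, pii i k⟫ + σ/2 * ‖xi i k - xb k‖^2)
            - (⟪xb (k+1) - xb k, pii i k + σ • (xi i k - xb (k+1))⟫
               + σ/2 * ‖xb (k+1) - xb k‖^2) := by
        intro i _
        have hsplit : xi i k - xb k = (xi i k - xb (k+1)) + (xb (k+1) - xb k) := by abel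
        rw [hsplit, inner_add_left, norm_add_sq_real, inner_add_right, real_inner_smul_right,
          real_inner_comm (xi i k - xb (k+1)) (xb (k+1) - xb k)]
        ring
      simp only [LA]
      rw [Finset.sum_congr rfl hper, Finset.sum_sub_distrib]
      have e2 : ∑ i : Fin m, (⟪xb (k+1) - xb k, pii i k + σ • (xi i k - xb (k+1))⟫
          + σ/2 * ‖xb (k+1) - xb k‖^2)
          = (m:ℝ) * σ / 2 * ‖xb (k+1) - xb k‖^2 := by
        rw [Finset.sum_add_distrib, ← inner_sum, hzero, inner_zero_right, zero_add,
          Finset.sum_const, Finset.card_univ, Fintype.card_fin, nsmul_eq_mul]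
        ring
      rw [e2]
    have hstep1 : ∀ k i, (m:ℝ)⁻¹ * fi i (xb (k+1))
        ≤ (m:ℝ)⁻¹ * fi i (xi i k) + ⟪xi i k - xb (k+1), pii i k⟫
          + σ/2 * ‖xi i k - xb (k+1)‖^2 + σ/12 * ‖xi i k - xb k‖^2 := by
      intro k i
      have hd1 := hHdesc i (xb (k+1)) (xi i k)
      rw [show xb (k+1) - xi i k = -(xi i k - xb (k+1)) from (neg_sub _ _).symm,
        inner_neg_right, map_neg, inner_neg_neg] at hd1
      have hd1' := mul_le_mul_of_nonneg_left hd1 (by positivity : (0:ℝ) ≤ (m:ℝ)⁻¹)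
      have e1 := hinner k i (xi i k - xb (k+1))
      have b1 : ⟪gradient (fi i) (xb k), xi i k - xb (k+1)⟫
          - ⟪gradient (fi i) (xi i k), xi i k - xb (k+1)⟫
          ≤ ri i * (‖xi i k - xb k‖ * ‖xi i k - xb (k+1)‖) := by
        rw [← inner_sub_left]
        calc ⟪gradient (fi i) (xb k) - gradient (fi i) (xi i k), xi i k - xb (k+1)⟫
            ≤ ‖gradient (fi i) (xb k) - gradient (fi i) (xi i k)‖ * ‖xi i k - xb (k+1)‖ :=
              real_inner_le_norm _ _
          _ ≤ (ri i * ‖xb k - xi i k‖) * ‖xi i k - xb (k+1)‖ :=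
              mul_le_mul_of_nonneg_right (hlip i _ _) (norm_nonneg _)
          _ = ri i * (‖xi i k - xb k‖ * ‖xi i k - xb (k+1)‖) := by rw [norm_sub_rev]; ring
      have b2 : ⟪H i (xi i k - xb k), xi i k - xb (k+1)⟫
          ≤ ri i * (‖xi i k - xb k‖ * ‖xi i k - xb (k+1)‖) := by
        calc ⟪H i (xi i k - xb k), xi i k - xb (k+1)⟫
            ≤ ‖H i (xi i k - xb k)‖ * ‖xi i k - xb (k+1)‖ := real_inner_le_norm _ _
          _ ≤ (ri i * ‖xi i k - xb k‖) * ‖xi i k - xb (k+1)‖ :=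
              mul_le_mul_of_nonneg_right (hHop i _) (norm_nonneg _)
          _ = ri i * (‖xi i k - xb k‖ * ‖xi i k - xb (k+1)‖) := by ring
      have b3 := hHle i (xi i k - xb (k+1))
      -- scaled versions
      have hab : (0:ℝ) ≤ ‖xi i k - xb k‖ * ‖xi i k - xb (k+1)‖ :=
        mul_nonneg (norm_nonneg _) (norm_nonneg _)
      have hmm1 : (m:ℝ)⁻¹ * (⟪gradient (fi i) (xb k), xi i k - xb (k+1)⟫
          - ⟪gradient (fi i) (xi i k), xi i k - xb (k+1)⟫)
          ≤ σ/6 * (‖xi i k - xb k‖ * ‖xi i k - xb (k+1)‖) := by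
        calc (m:ℝ)⁻¹ * (⟪gradient (fi i) (xb k), xi i k - xb (k+1)⟫
            - ⟪gradient (fi i) (xi i k), xi i k - xb (k+1)⟫)
            ≤ (m:ℝ)⁻¹ * (ri i * (‖xi i k - xb k‖ * ‖xi i k - xb (k+1)‖)) :=
              mul_le_mul_of_nonneg_left b1 (by positivity)
          _ = (ri i * (m:ℝ)⁻¹) * (‖xi i k - xb k‖ * ‖xi i k - xb (k+1)‖) := by ring
          _ ≤ σ/6 * (‖xi i k - xb k‖ * ‖xi i k - xb (k+1)‖) :=
              mul_le_mul_of_nonneg_right (hrm i) hab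
      have hmm2 : (m:ℝ)⁻¹ * ⟪H i (xi i k - xb k), xi i k - xb (k+1)⟫
          ≤ σ/6 * (‖xi i k - xb k‖ * ‖xi i k - xb (k+1)‖) := by
        calc (m:ℝ)⁻¹ * ⟪H i (xi i k - xb k), xi i k - xb (k+1)⟫
            ≤ (m:ℝ)⁻¹ * (ri i * (‖xi i k - xb k‖ * ‖xi i k - xb (k+1)‖)) :=
              mul_le_mul_of_nonneg_left b2 (by positivity)
          _ = (ri i * (m:ℝ)⁻¹) * (‖xi i k - xb k‖ * ‖xi i k - xb (k+1)‖) := by ring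
          _ ≤ σ/6 * (‖xi i k - xb k‖ * ‖xi i k - xb (k+1)‖) :=
              mul_le_mul_of_nonneg_right (hrm i) hab
      have hmm3 : (m:ℝ)⁻¹ * ⟪H i (xi i k - xb (k+1)), xi i k - xb (k+1)⟫
          ≤ σ/6 * ‖xi i k - xb (k+1)‖^2 := by
        calc (m:ℝ)⁻¹ * ⟪H i (xi i k - xb (k+1)), xi i k - xb (k+1)⟫
            ≤ (m:ℝ)⁻¹ * (ri i * ‖xi i k - xb (k+1)‖^2) :=
              mul_le_mul_of_nonneg_left b3 (by positivity)
          _ = (ri i * (m:ℝ)⁻¹) * ‖xi i k - xb (k+1)‖^2 := by ring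
          _ ≤ σ/6 * ‖xi i k - xb (k+1)‖^2 :=
              mul_le_mul_of_nonneg_right (hrm i) (sq_nonneg _)
      nlinarith [hd1', e1, hmm1, hmm2, hmm3,
        mul_nonneg hσ.le (sq_nonneg (‖xi i k - xb k‖ - 2 * ‖xi i k - xb (k+1)‖)),
        mul_nonneg hσ.le (sq_nonneg (‖xi i k - xb (k+1)‖))]
    have hstep2 : ∀ k i, (m:ℝ)⁻¹ * fi i (xi i (k+1)) + ⟪xi i (k+1) - xb (k+1), pii i (k+1)⟫
          + σ/2 * ‖xi i (k+1) - xb (k+1)‖^2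
        ≤ (m:ℝ)⁻¹ * fi i (xb (k+1)) + σ/2 * ‖xi i (k+1) - xb (k+1)‖^2 := by
      intro k i
      by_cases hC : i ∈ C (k + 1)
      · have hd := hHdesc i (xi i (k+1)) (xb (k+1))
        have hd' := mul_le_mul_of_nonneg_left hd (by positivity : (0:ℝ) ≤ (m:ℝ)⁻¹)
        have e1 := hinner (k+1) i (xi i (k+1) - xb (k+1))
        have hps := mul_nonneg (by positivity : (0:ℝ) ≤ (m:ℝ)⁻¹)
          (hHpsd i (xi i (k+1) - xb (k+1)))
        linarith
      · rw [hfixx k i hC, sub_self, inner_zero_left]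
        simp
    have hLdesc : ∀ k, LA m σ fi (xb (k+1)) (fun i => xi i (k+1)) (fun i => pii i (k+1))
        ≤ LA m σ fi (xb k) (fun i => xi i k) (fun i => pii i k)
          - (m:ℝ)*σ/2 * ‖xb (k+1) - xb k‖^2
          + σ/12 * (∑ i, ‖xi i k - xb k‖^2)
          + σ/2 * (∑ i, ‖xi i (k+1) - xb (k+1)‖^2) := by
      intro k
      have h1 : LA m σ fi (xb (k+1)) (fun i => xi i (k+1)) (fun i => pii i (k+1))
          ≤ LA m σ fi (xb (k+1)) (fun i => xi i k) (fun i => pii i k)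
            + (σ/12 * (∑ i, ‖xi i k - xb k‖^2)
              + σ/2 * (∑ i, ‖xi i (k+1) - xb (k+1)‖^2)) := by
        simp only [LA]
        rw [Finset.mul_sum, Finset.mul_sum, ← Finset.sum_add_distrib,
          ← Finset.sum_add_distrib]
        apply Finset.sum_le_sum
        intro i _
        have hh1 := hstep1 k i
        have hh2 := hstep2 k i
        linarith
      rw [hQ k] at h1
      linarith
    have hEdesc : ∀ k,
        LA m σ fi (xb (k+1)) (fun i => xi i (k+1)) (fun i => pii i (k+1))
          + σ/4 * (∑ i, ‖xi i (k+1) - xb (k+1)‖^2)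
        ≤ (LA m σ fi (xb k) (fun i => xi i k) (fun i => pii i k)
            + σ/4 * (∑ i, ‖xi i k - xb k‖^2))
          - 7/16*(m:ℝ)*σ*‖xb (k+1) - xb k‖^2
          - 5/48*σ*(∑ i, ‖xi i k - xb k‖^2) := by
      intro k
      have h1 := hLdesc k
      have h3 := mul_le_mul_of_nonneg_left (hSRec k) hσ.le
      linarith
    have hLow : ∀ k, ftot m fi (xb k)
        ≤ LA m σ fi (xb k) (fun i => xi i k) (fun i => pii i k) := by
      intro k
      simp only [ftot, LA, Finset.mul_sum]
      apply Finset.sum_le_sum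
      intro i _
      have hd := (abs_le.mp (hgb i (xb k) (xi i k))).2
      rw [show xb k - xi i k = -(xi i k - xb k) from (neg_sub _ _).symm,
        inner_neg_right, norm_neg] at hd
      have hd' := mul_le_mul_of_nonneg_left hd (by positivity : (0:ℝ) ≤ (m:ℝ)⁻¹)
      have e1 := hinner k i (xi i k - xb k)
      have b1 : ⟪gradient (fi i) (xb k), xi i k - xb k⟫
          - ⟪gradient (fi i) (xi i k), xi i k - xb k⟫
          ≤ ri i * (‖xi i k - xb k‖ * ‖xi i k - xb k‖) := by
        rw [← inner_sub_left]
        calc ⟪gradient (fi i) (xb k) - gradient (fi i) (xi i k), xi i k - xb k⟫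
            ≤ ‖gradient (fi i) (xb k) - gradient (fi i) (xi i k)‖ * ‖xi i k - xb k‖ :=
              real_inner_le_norm _ _
          _ ≤ (ri i * ‖xb k - xi i k‖) * ‖xi i k - xb k‖ :=
              mul_le_mul_of_nonneg_right (hlip i _ _) (norm_nonneg _)
          _ = ri i * (‖xi i k - xb k‖ * ‖xi i k - xb k‖) := by rw [norm_sub_rev]; ring
      have b3 := hHle i (xi i k - xb k)
      have hmm1 : (m:ℝ)⁻¹ * (⟪gradient (fi i) (xb k), xi i k - xb k⟫
          - ⟪gradient (fi i) (xi i k), xi i k - xb k⟫)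
          ≤ σ/6 * (‖xi i k - xb k‖ * ‖xi i k - xb k‖) := by
        calc (m:ℝ)⁻¹ * (⟪gradient (fi i) (xb k), xi i k - xb k⟫
            - ⟪gradient (fi i) (xi i k), xi i k - xb k⟫)
            ≤ (m:ℝ)⁻¹ * (ri i * (‖xi i k - xb k‖ * ‖xi i k - xb k‖)) :=
              mul_le_mul_of_nonneg_left b1 (by positivity)
          _ = (ri i * (m:ℝ)⁻¹) * (‖xi i k - xb k‖ * ‖xi i k - xb k‖) := by ring
          _ ≤ σ/6 * (‖xi i k - xb k‖ * ‖xi i k - xb k‖) :=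
              mul_le_mul_of_nonneg_right (hrm i)
                (mul_nonneg (norm_nonneg _) (norm_nonneg _))
      have hmm2 : (m:ℝ)⁻¹ * ⟪H i (xi i k - xb k), xi i k - xb k⟫
          ≤ σ/6 * ‖xi i k - xb k‖^2 := by
        calc (m:ℝ)⁻¹ * ⟪H i (xi i k - xb k), xi i k - xb k⟫
            ≤ (m:ℝ)⁻¹ * (ri i * ‖xi i k - xb k‖^2) :=
              mul_le_mul_of_nonneg_left b3 (by positivity)
          _ = (ri i * (m:ℝ)⁻¹) * ‖xi i k - xb k‖^2 := by ring
          _ ≤ σ/6 * ‖xi i k - xb k‖^2 :=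
              mul_le_mul_of_nonneg_right (hrm i) (sq_nonneg _)
      have hmm3 : (ri i * (m:ℝ)⁻¹) * ‖xi i k - xb k‖^2 ≤ σ/6 * ‖xi i k - xb k‖^2 :=
        mul_le_mul_of_nonneg_right (hrm i) (sq_nonneg _)
      nlinarith [hd', e1, hmm1, hmm2, hmm3, sq_nonneg (‖xi i k - xb k‖)]
    have hGrad : ∀ k, ‖gradient (ftot m fi) (xb (k+1))‖^2
        ≤ 2*(m:ℝ)^2*σ^2*‖xb (k+1+1) - xb (k+1)‖^2
          + 8*(m:ℝ)*σ^2*(∑ i, ‖xi i (k+1) - xb (k+1)‖^2) := by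
      intro k
      have h1 : ∑ i, pii i (k+1)
          = -((m:ℝ)⁻¹ • ∑ i, gradient (fi i) (xb (k+1)))
            - (m:ℝ)⁻¹ • ∑ i, H i (xi i (k+1) - xb (k+1)) := by
        rw [Finset.sum_congr rfl (fun i (_ : i ∈ Finset.univ) => hA (k+1) i),
          Finset.sum_neg_distrib, ← Finset.smul_sum, Finset.sum_add_distrib, smul_add,
          neg_add, ← sub_eq_add_neg]
      have h3 : ∑ i, pii i (k+1) = σ • ((m:ℝ) • xb (k+1+1) - ∑ i, xi i (k+1)) := by
        rw [hAgg (k+1)]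
        have e : ((∑ i, xi i (k+1)) + σ⁻¹ • ∑ i, pii i (k+1)) - ∑ i, xi i (k+1)
            = σ⁻¹ • ∑ i, pii i (k+1) := by abel
        rw [e, smul_smul, mul_inv_cancel₀ (ne_of_gt hσ), one_smul]
      have h4 : (m:ℝ) • xb (k+1+1) - ∑ i, xi i (k+1)
          = (m:ℝ) • (xb (k+1+1) - xb (k+1)) - ∑ i, (xi i (k+1) - xb (k+1)) := by
        rw [Finset.sum_sub_distrib, Finset.sum_const, Finset.card_univ, Fintype.card_fin,
          ← Nat.cast_smul_eq_nsmul ℝ, smul_sub]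
        abel
      have hid : gradient (ftot m fi) (xb (k+1))
          = -(σ • ((m:ℝ) • (xb (k+1+1) - xb (k+1)) - ∑ i, (xi i (k+1) - xb (k+1))))
            - (m:ℝ)⁻¹ • ∑ i, H i (xi i (k+1) - xb (k+1)) := by
        rw [hgradf]
        have e : (m:ℝ)⁻¹ • ∑ i, gradient (fi i) (xb (k+1))
            = -(∑ i, pii i (k+1)) - (m:ℝ)⁻¹ • ∑ i, H i (xi i (k+1) - xb (k+1)) := by
          rw [h1]; abel
        rw [e, h3, h4]
      have hTnn : (0:ℝ) ≤ ∑ i, ‖xi i (k+1) - xb (k+1)‖ := by positivity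
      have hX : ‖(m:ℝ) • (xb (k+1+1) - xb (k+1)) - ∑ i, (xi i (k+1) - xb (k+1))‖
          ≤ (m:ℝ) * ‖xb (k+1+1) - xb (k+1)‖ + ∑ i, ‖xi i (k+1) - xb (k+1)‖ := by
        calc ‖(m:ℝ) • (xb (k+1+1) - xb (k+1)) - ∑ i, (xi i (k+1) - xb (k+1))‖
            ≤ ‖(m:ℝ) • (xb (k+1+1) - xb (k+1))‖ + ‖∑ i, (xi i (k+1) - xb (k+1))‖ :=
              norm_sub_le _ _
          _ ≤ (m:ℝ) * ‖xb (k+1+1) - xb (k+1)‖ + ∑ i, ‖xi i (k+1) - xb (k+1)‖ := by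
              rw [norm_smul, Real.norm_eq_abs, abs_of_pos hmR]
              exact add_le_add le_rfl (norm_sum_le _ _)
      have hH2 : ‖(m:ℝ)⁻¹ • ∑ i, H i (xi i (k+1) - xb (k+1))‖
          ≤ σ/6 * ∑ i, ‖xi i (k+1) - xb (k+1)‖ := by
        rw [norm_smul, Real.norm_eq_abs, abs_of_pos (by positivity : (0:ℝ) < (m:ℝ)⁻¹)]
        calc (m:ℝ)⁻¹ * ‖∑ i, H i (xi i (k+1) - xb (k+1))‖
            ≤ (m:ℝ)⁻¹ * ∑ i, ‖H i (xi i (k+1) - xb (k+1))‖ :=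
              mul_le_mul_of_nonneg_left (norm_sum_le _ _) (by positivity)
          _ = ∑ i, (m:ℝ)⁻¹ * ‖H i (xi i (k+1) - xb (k+1))‖ := Finset.mul_sum _ _ _
          _ ≤ ∑ i, σ/6 * ‖xi i (k+1) - xb (k+1)‖ := by
              apply Finset.sum_le_sum
              intro i _
              calc (m:ℝ)⁻¹ * ‖H i (xi i (k+1) - xb (k+1))‖
                  ≤ (m:ℝ)⁻¹ * (ri i * ‖xi i (k+1) - xb (k+1)‖) :=
                    mul_le_mul_of_nonneg_left (hHop i _) (by positivity)
                _ = (ri i * (m:ℝ)⁻¹) * ‖xi i (k+1) - xb (k+1)‖ := by ring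
                _ ≤ σ/6 * ‖xi i (k+1) - xb (k+1)‖ :=
                    mul_le_mul_of_nonneg_right (hrm i) (norm_nonneg _)
          _ = σ/6 * ∑ i, ‖xi i (k+1) - xb (k+1)‖ := (Finset.mul_sum _ _ _).symm
      have hnb : ‖gradient (ftot m fi) (xb (k+1))‖
          ≤ (m:ℝ)*σ*‖xb (k+1+1) - xb (k+1)‖ + 2*σ*∑ i, ‖xi i (k+1) - xb (k+1)‖ := by
        rw [hid]
        calc ‖-(σ • ((m:ℝ) • (xb (k+1+1) - xb (k+1)) - ∑ i, (xi i (k+1) - xb (k+1))))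
              - (m:ℝ)⁻¹ • ∑ i, H i (xi i (k+1) - xb (k+1))‖
            ≤ ‖-(σ • ((m:ℝ) • (xb (k+1+1) - xb (k+1)) - ∑ i, (xi i (k+1) - xb (k+1))))‖
              + ‖(m:ℝ)⁻¹ • ∑ i, H i (xi i (k+1) - xb (k+1))‖ := norm_sub_le _ _
          _ = ‖σ • ((m:ℝ) • (xb (k+1+1) - xb (k+1)) - ∑ i, (xi i (k+1) - xb (k+1)))‖
              + ‖(m:ℝ)⁻¹ • ∑ i, H i (xi i (k+1) - xb (k+1))‖ := by rw [norm_neg]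
          _ ≤ σ * ((m:ℝ) * ‖xb (k+1+1) - xb (k+1)‖ + ∑ i, ‖xi i (k+1) - xb (k+1)‖)
              + σ/6 * ∑ i, ‖xi i (k+1) - xb (k+1)‖ := by
              refine add_le_add ?_ hH2
              rw [norm_smul, Real.norm_eq_abs, abs_of_pos hσ]
              exact mul_le_mul_of_nonneg_left hX hσ.le
          _ ≤ (m:ℝ)*σ*‖xb (k+1+1) - xb (k+1)‖ + 2*σ*∑ i, ‖xi i (k+1) - xb (k+1)‖ := by
              nlinarith [mul_nonneg hσ.le hTnn]
      have hcs : (∑ i, ‖xi i (k+1) - xb (k+1)‖)^2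
          ≤ (m:ℝ) * ∑ i, ‖xi i (k+1) - xb (k+1)‖^2 := by
        have h := sq_sum_le_card_mul_sum_sq (s := (Finset.univ : Finset (Fin m)))
          (f := fun i => ‖xi i (k+1) - xb (k+1)‖)
        simpa [Finset.card_univ] using h
      have hg2 := pow_le_pow_left₀ (norm_nonneg _) hnb 2
      have hcs' := mul_le_mul_of_nonneg_left hcs (by positivity : (0:ℝ) ≤ 8*σ^2)
      nlinarith [hg2, hcs',
        sq_nonneg ((m:ℝ)*σ*‖xb (k+1+1) - xb (k+1)‖ - 2*σ*∑ i, ‖xi i (k+1) - xb (k+1)‖)]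
    -- the Lyapunov function
    obtain ⟨EE, hEE⟩ : ∃ EE : ℕ → ℝ, ∀ j, EE j
        = LA m σ fi (xb j) (fun i => xi i j) (fun i => pii i j)
          + σ/4 * (∑ i, ‖xi i j - xb j‖^2) :=
      ⟨fun j => LA m σ fi (xb j) (fun i => xi i j) (fun i => pii i j)
          + σ/4 * (∑ i, ‖xi i j - xb j‖^2), fun j => rfl⟩
    have hEd' : ∀ j, EE (j+1) ≤ EE j - 7/16*(m:ℝ)*σ*‖xb (j+1) - xb j‖^2
        - 5/48*σ*(∑ i, ‖xi i j - xb j‖^2) := by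
      intro j
      rw [hEE (j+1), hEE j]
      exact hEdesc j
    have hkey : ∀ j, ‖gradient (ftot m fi) (xb (j+1))‖^2
        ≤ 77*(m:ℝ)*σ*(EE (j+1) - EE (j+1+1)) := by
      intro j
      have h1 := hGrad j
      have h2 := hEd' (j+1)
      have h3 := mul_le_mul_of_nonneg_left h2 (by positivity : (0:ℝ) ≤ 77*(m:ℝ)*σ)
      nlinarith [mul_nonneg (mul_nonneg (mul_nonneg hmR.le hmR.le) (sq_nonneg σ))
          (sq_nonneg (‖xb (j+1+1) - xb (j+1)‖)),
        mul_nonneg (mul_nonneg hmR.le (sq_nonneg σ)) (hSnn (j+1))]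
    have hsum : ∑ j ∈ Finset.range k, ‖gradient (ftot m fi) (xb (j+1))‖^2
        ≤ 77*(m:ℝ)*σ*(EE 1 - EE (k+1)) := by
      calc ∑ j ∈ Finset.range k, ‖gradient (ftot m fi) (xb (j+1))‖^2
          ≤ ∑ j ∈ Finset.range k, 77*(m:ℝ)*σ*(EE (j+1) - EE (j+1+1)) :=
            Finset.sum_le_sum (fun j _ => hkey j)
        _ = 77*(m:ℝ)*σ*(EE 1 - EE (k+1)) := by
            rw [← Finset.mul_sum]
            congr 1
            exact Finset.sum_range_sub' (fun t => EE (t+1)) k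
    have hE1le : EE 1 ≤ EE 0 := by
      have h := hEd' 0
      nlinarith [hSnn 0, mul_nonneg (mul_nonneg hmR.le hσ.le) (sq_nonneg (‖xb (0+1) - xb 0‖)),
        mul_nonneg hσ.le (hSnn 0)]
    have hE0 : EE 0 = LA m σ fi (xb 0) (fun i => xi i 0) (fun i => pii i 0) := by
      rw [hEE 0]
      have hz : ∀ i ∈ Finset.univ, ‖xi i 0 - xb 0‖^2 = (0:ℝ) := by
        intro i _
        rw [hx0 i, sub_self, norm_zero]
        norm_num
      rw [Finset.sum_congr rfl hz, Finset.sum_const_zero]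
      ring
    have hEk1 : sInf (Set.range (ftot m fi)) ≤ EE (k+1) := by
      have h1 := hfstar (xb (k+1))
      have h2 := hLow (k+1)
      rw [hEE (k+1)]
      nlinarith [mul_nonneg hσ.le (hSnn (k+1))]
    -- conclusion
    by_contra hcon
    push_neg at hcon
    have hkR : (0:ℝ) < k := by exact_mod_cast lt_of_lt_of_le Nat.zero_lt_one hk
    have hlt : ∀ j ∈ Finset.range k,
        100*(m:ℝ)*σ/(k:ℝ) * (LA m σ fi (xb 0) (fun i => xi i 0) (fun i => pii i 0)
          - sInf (Set.range (ftot m fi)))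
        < ‖gradient (ftot m fi) (xb (j+1))‖^2 := by
      intro j hj
      exact hcon (j+1) (by omega) (Nat.succ_le_of_lt (Finset.mem_range.mp hj))
    have hsum2 := Finset.sum_lt_sum_of_nonempty
      (Finset.nonempty_range_iff.mpr (by omega : k ≠ 0)) hlt
    rw [Finset.sum_const, Finset.card_range, nsmul_eq_mul] at hsum2
    have heq : (k:ℝ) * (100*(m:ℝ)*σ/(k:ℝ)
        * (LA m σ fi (xb 0) (fun i => xi i 0) (fun i => pii i 0)
          - sInf (Set.range (ftot m fi))))
        = 100*(m:ℝ)*σ*(LA m σ fi (xb 0) (fun i => xi i 0) (fun i => pii i 0)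
          - sInf (Set.range (ftot m fi))) := by
      field_simp
    rw [heq] at hsum2
    have hfin1 : 77*(m:ℝ)*σ*(EE 1 - EE (k+1))
        ≤ 77*(m:ℝ)*σ*(LA m σ fi (xb 0) (fun i => xi i 0) (fun i => pii i 0)
          - sInf (Set.range (ftot m fi))) := by
      apply mul_le_mul_of_nonneg_left _ (by positivity : (0:ℝ) ≤ 77*(m:ℝ)*σ)
      rw [← hE0]
      linarith
    have hfin2 : (0:ℝ) ≤ (23*(m:ℝ)*σ)
        * (LA m σ fi (xb 0) (fun i => xi i 0) (fun i => pii i 0)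
          - sInf (Set.range (ftot m fi))) :=
      mul_nonneg (by positivity) hD0
    linarith [hsum, hsum2, hfin1, hfin2]
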